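/- arXiv:2411.13015 — 7 statements merged into one kernel-verified Lean document; each statement's English description precedes it below -/
import Mathlib

section
/- Let π be a probability mass function on a finite product set 𝒳0 × 𝒳1 × 𝒴0 × 𝒴1 × ℳ, and write x = (x0, x1), y = (y0, y1). Suppose there exist probability mass functions μ0 on 𝒳0 × 𝒴0 and μ1 on 𝒳1 × 𝒴1 and nonnegative functions g1, g2, g3 such that π(x, y, m) = μ0(x0, y0) · μ1(x1, y1) · g1(x, m) · g2(y, m) · g3(x0, y1, m) for all points. Then X1 and Y0 are conditionally independent given (X0, Y1, M): for every (x0, y1, m) with π(X0 = x0, Y1 = y1, M = m) > 0 and all x1, y0, one has π(x1, y0 | x0, y1, m) = π(x1 | x0, y1, m) · π(y0 | x0, y1, m). -/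
/-- **Partial rectangle property implies conditional independence.**
Let `π` be a pmf on `𝒳0 × 𝒳1 × 𝒴0 × 𝒴1 × ℳ` (written in curried form) which factors as
`π(x, y, m) = μ0(x0, y0) · μ1(x1, y1) · g1(x, m) · g2(y, m) · g3(x0, y1, m)` with `g1, g2, g3`
nonnegative.  Then `X1 ⊥ Y0 ∣ (X0, Y1, M)`: for every `(x0, y1, m)` whose marginal probability
is positive, and all `x1, y0`, `π(x1, y0 ∣ x0, y1, m) = π(x1 ∣ x0, y1, m) · π(y0 ∣ x0, y1, m)`,
where conditional probabilities are ratios of the corresponding marginals. -/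
theorem stmt3 {X0 X1 Y0 Y1 M : Type*}
    [Fintype X0] [Fintype X1] [Fintype Y0] [Fintype Y1] [Fintype M]
    (π : X0 → X1 → Y0 → Y1 → M → ℝ)
    (hπ0 : ∀ x0 x1 y0 y1 m, 0 ≤ π x0 x1 y0 y1 m)
    (hπ1 : (∑ x0, ∑ x1, ∑ y0, ∑ y1, ∑ m, π x0 x1 y0 y1 m) = 1)
    (μ0 : X0 → Y0 → ℝ) (μ1 : X1 → Y1 → ℝ)
    (hμ00 : ∀ x0 y0, 0 ≤ μ0 x0 y0) (hμ01 : (∑ x0, ∑ y0, μ0 x0 y0) = 1)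
    (hμ10 : ∀ x1 y1, 0 ≤ μ1 x1 y1) (hμ11 : (∑ x1, ∑ y1, μ1 x1 y1) = 1)
    (g1 : X0 × X1 → M → ℝ) (g2 : Y0 × Y1 → M → ℝ) (g3 : X0 → Y1 → M → ℝ)
    (hg1 : ∀ x m, 0 ≤ g1 x m) (hg2 : ∀ y m, 0 ≤ g2 y m) (hg3 : ∀ x0 y1 m, 0 ≤ g3 x0 y1 m)
    (hfac : ∀ x0 x1 y0 y1 m,
      π x0 x1 y0 y1 m = μ0 x0 y0 * μ1 x1 y1 * g1 (x0, x1) m * g2 (y0, y1) m * g3 x0 y1 m)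
    (x0 : X0) (y1 : Y1) (m : M)
    (hpos : 0 < ∑ x1, ∑ y0, π x0 x1 y0 y1 m)
    (x1 : X1) (y0 : Y0) :
    π x0 x1 y0 y1 m / (∑ x1', ∑ y0', π x0 x1' y0' y1 m) =
      ((∑ y0', π x0 x1 y0' y1 m) / (∑ x1', ∑ y0', π x0 x1' y0' y1 m)) *
        ((∑ x1', π x0 x1' y0 y1 m) / (∑ x1', ∑ y0', π x0 x1' y0' y1 m)) := by
  have key : π x0 x1 y0 y1 m * (∑ x1', ∑ y0', π x0 x1' y0' y1 m) =
      (∑ y0', π x0 x1 y0' y1 m) * (∑ x1', π x0 x1' y0 y1 m) := by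
    rw [Finset.mul_sum, Finset.sum_mul_sum, Finset.sum_comm]
    refine Finset.sum_congr rfl fun x1' _ => ?_
    rw [Finset.mul_sum]
    refine Finset.sum_congr rfl fun y0' _ => ?_
    simp only [hfac]; ring
  rw [div_mul_div_comm, ← key, mul_comm
    (∑ x1', ∑ y0', π x0 x1' y0' y1 m) (∑ x1', ∑ y0', π x0 x1' y0' y1 m),
    mul_div_mul_right _ _ hpos.ne']
end

section
/- Let π be a probability mass function on a finite product set 𝒳0 × 𝒳1 × 𝒴0 × 𝒴1 × ℳ with the partial rectangle property with respect to μ0 ⊗ μ1, i.e., π(x, y, m) = μ0(x0, y0) · μ1(x1, y1) · g1(x, m) · g2(y, m) · g3(x0, y1, m) for nonnegative g1, g2, g3, where x = (x0, x1), y = (y0, y1). Then: (i) there exist nonnegative functions h1 on 𝒳0 × (𝒴1 × ℳ) and h2 on 𝒴0 × (𝒴1 × ℳ) such that the marginal satisfies π(x0, y0, y1, m) = μ0(x0, y0) · h1(x0, (y1, m)) · h2(y0, (y1, m)) for all points; and (ii) there exist nonnegative functions h3 on 𝒳1 × (𝒳0 × ℳ) and h4 on 𝒴1 × (𝒳0 ×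 ℳ) such that π(x0, x1, y1, m) = μ1(x1, y1) · h3(x1, (x0, m)) · h4(y1, (x0, m)) for all points. -/
/-- **Decomposition preserves the rectangle property.**
Let `π` be a pmf on `𝒳0 × 𝒳1 × 𝒴0 × 𝒴1 × ℳ` with the partial rectangle property with respect
to `μ0 ⊗ μ1`.  Then (i) the marginal law of `(X0, Y0, (Y1, M))` has the rectangle property with
respect to `μ0`, and (ii) the marginal law of `(X1, Y1, (X0, M))` has the rectangle property
with respect to `μ1`. -/
theorem stmt4 {X0 X1 Y0 Y1 M : Type*}
    [Fintype X0] [Fintype X1] [Fintype Y0] [Fintype Y1] [Fintype M]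
    (π : X0 → X1 → Y0 → Y1 → M → ℝ)
    (hπ0 : ∀ x0 x1 y0 y1 m, 0 ≤ π x0 x1 y0 y1 m)
    (hπ1 : (∑ x0, ∑ x1, ∑ y0, ∑ y1, ∑ m, π x0 x1 y0 y1 m) = 1)
    (μ0 : X0 → Y0 → ℝ) (μ1 : X1 → Y1 → ℝ)
    (hμ00 : ∀ x0 y0, 0 ≤ μ0 x0 y0) (hμ01 : (∑ x0, ∑ y0, μ0 x0 y0) = 1)
    (hμ10 : ∀ x1 y1, 0 ≤ μ1 x1 y1) (hμ11 : (∑ x1, ∑ y1, μ1 x1 y1) = 1)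
    (g1 : X0 × X1 → M → ℝ) (g2 : Y0 × Y1 → M → ℝ) (g3 : X0 → Y1 → M → ℝ)
    (hg1 : ∀ x m, 0 ≤ g1 x m) (hg2 : ∀ y m, 0 ≤ g2 y m) (hg3 : ∀ x0 y1 m, 0 ≤ g3 x0 y1 m)
    (hfac : ∀ x0 x1 y0 y1 m,
      π x0 x1 y0 y1 m = μ0 x0 y0 * μ1 x1 y1 * g1 (x0, x1) m * g2 (y0, y1) m * g3 x0 y1 m) :
    (∃ h1 : X0 → Y1 × M → ℝ, ∃ h2 : Y0 → Y1 × M → ℝ,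
      (∀ x0 p, 0 ≤ h1 x0 p) ∧ (∀ y0 p, 0 ≤ h2 y0 p) ∧
      (∀ x0 y0 y1 m, (∑ x1, π x0 x1 y0 y1 m) = μ0 x0 y0 * h1 x0 (y1, m) * h2 y0 (y1, m))) ∧
    (∃ h3 : X1 → X0 × M → ℝ, ∃ h4 : Y1 → X0 × M → ℝ,
      (∀ x1 p, 0 ≤ h3 x1 p) ∧ (∀ y1 p, 0 ≤ h4 y1 p) ∧
      (∀ x0 x1 y1 m, (∑ y0, π x0 x1 y0 y1 m) = μ1 x1 y1 * h3 x1 (x0, m) * h4 y1 (x0, m))) := by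
  constructor
  · refine ⟨fun x0 p => (∑ x1, μ1 x1 p.1 * g1 (x0, x1) p.2) * g3 x0 p.1 p.2,
      fun y0 p => g2 (y0, p.1) p.2, ?_, fun y0 p => hg2 _ _, ?_⟩
    · intro x0 p
      exact mul_nonneg (Finset.sum_nonneg fun x1 _ => mul_nonneg (hμ10 _ _) (hg1 _ _)) (hg3 _ _ _)
    · intro x0 y0 y1 m
      simp only [hfac, Finset.sum_mul, Finset.mul_sum]
      congr 1; ext x1; ring
  · refine ⟨fun x1 p => g1 (p.1, x1) p.2,
      fun y1 p => (∑ y0, μ0 p.1 y0 * g2 (y0, y1) p.2) * g3 p.1 y1 p.2,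
      fun x1 p => hg1 _ _, ?_, ?_⟩
    · intro y1 p
      exact mul_nonneg (Finset.sum_nonneg fun y0 _ => mul_nonneg (hμ00 _ _) (hg2 _ _)) (hg3 _ _ _)
    · intro x0 x1 y1 m
      simp only [hfac, Finset.sum_mul, Finset.mul_sum]
      congr 1; ext y0; ring
end

section
/- Let π be a probability mass function on 𝒳0 × 𝒳1 × 𝒴0 × 𝒴1 × ℳ (all sets finite) with the partial rectangle property with respect to μ0 ⊗ μ1: π(x, y, m) = μ0(x0, y0) · μ1(x1, y1) · g1(x, m) · g2(y, m) · g3(x0, y1, m) for nonnegative g1, g2, g3, where x = (x0, x1), y = (y0, y1). Then for every point (x, y, m) with π(x, y, m) > 0, the following two identities hold: (Alice side) π(x | y, m) / (μ0(x0 | y0) · μ1(x1 | y1)) = [ π(x0 | y0, y1, m) / μ0(x0 | y0) ] · [ π(x1 | x0, y1, m) / μ1(x1 | y1) ]; and (Bob side) π(y | x, m) / (μ0(y0 | x0) · μ1(y1 | x1)) = [ π(y0 | x0, y1, m) / μ0(y0 | x0) ] · [ π(y1 | x0, x1, m) / μ1(y1 | x1) ]. -/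
/-- **Linearity of pointwise γ-costs under binary decomposition.**
Let `π` be a pmf on `𝒳0 × 𝒳1 × 𝒴0 × 𝒴1 × ℳ` (curried) with the partial rectangle property
with respect to `μ0 ⊗ μ1`.  Then at every point of positive probability, the Alice-side ratio
`π(x ∣ y, m) / (μ0(x0 ∣ y0)·μ1(x1 ∣ y1))` factors as
`[π(x0 ∣ y0, y1, m)/μ0(x0 ∣ y0)] · [π(x1 ∣ x0, y1, m)/μ1(x1 ∣ y1)]`, and symmetrically the
Bob-side ratio `π(y ∣ x, m) / (μ0(y0 ∣ x0)·μ1(y1 ∣ x1))` factors as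
`[π(y0 ∣ x0, y1, m)/μ0(y0 ∣ x0)] · [π(y1 ∣ x0, x1, m)/μ1(y1 ∣ x1)]`.  All conditional
probabilities are ratios of the corresponding marginals. -/
theorem stmt6 {X0 X1 Y0 Y1 M : Type*}
    [Fintype X0] [Fintype X1] [Fintype Y0] [Fintype Y1] [Fintype M]
    (π : X0 → X1 → Y0 → Y1 → M → ℝ)
    (hπ0 : ∀ x0 x1 y0 y1 m, 0 ≤ π x0 x1 y0 y1 m)
    (hπ1 : (∑ x0, ∑ x1, ∑ y0, ∑ y1, ∑ m, π x0 x1 y0 y1 m) = 1)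
    (μ0 : X0 → Y0 → ℝ) (μ1 : X1 → Y1 → ℝ)
    (hμ00 : ∀ x0 y0, 0 ≤ μ0 x0 y0) (hμ01 : (∑ x0, ∑ y0, μ0 x0 y0) = 1)
    (hμ10 : ∀ x1 y1, 0 ≤ μ1 x1 y1) (hμ11 : (∑ x1, ∑ y1, μ1 x1 y1) = 1)
    (g1 : X0 × X1 → M → ℝ) (g2 : Y0 × Y1 → M → ℝ) (g3 : X0 → Y1 → M → ℝ)
    (hg1 : ∀ x m, 0 ≤ g1 x m) (hg2 : ∀ y m, 0 ≤ g2 y m) (hg3 : ∀ x0 y1 m, 0 ≤ g3 x0 y1 m)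
    (hfac : ∀ x0 x1 y0 y1 m,
      π x0 x1 y0 y1 m = μ0 x0 y0 * μ1 x1 y1 * g1 (x0, x1) m * g2 (y0, y1) m * g3 x0 y1 m)
    (x0 : X0) (x1 : X1) (y0 : Y0) (y1 : Y1) (m : M)
    (hpos : 0 < π x0 x1 y0 y1 m) :
    -- Alice side
    ((π x0 x1 y0 y1 m / (∑ x0', ∑ x1', π x0' x1' y0 y1 m)) /
        ((μ0 x0 y0 / ∑ x0', μ0 x0' y0) * (μ1 x1 y1 / ∑ x1', μ1 x1' y1)) =
      (((∑ x1', π x0 x1' y0 y1 m) / (∑ x0', ∑ x1', π x0' x1' y0 y1 m)) /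
          (μ0 x0 y0 / ∑ x0', μ0 x0' y0)) *
        (((∑ y0', π x0 x1 y0' y1 m) / (∑ x1', ∑ y0', π x0 x1' y0' y1 m)) /
          (μ1 x1 y1 / ∑ x1', μ1 x1' y1))) ∧
    -- Bob side
    ((π x0 x1 y0 y1 m / (∑ y0', ∑ y1', π x0 x1 y0' y1' m)) /
        ((μ0 x0 y0 / ∑ y0', μ0 x0 y0') * (μ1 x1 y1 / ∑ y1', μ1 x1 y1')) =
      (((∑ x1', π x0 x1' y0 y1 m) / (∑ x1', ∑ y0', π x0 x1' y0' y1 m)) /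
          (μ0 x0 y0 / ∑ y0', μ0 x0 y0')) *
        (((∑ y0', π x0 x1 y0' y1 m) / (∑ y0', ∑ y1', π x0 x1 y0' y1' m)) /
          (μ1 x1 y1 / ∑ y1', μ1 x1 y1'))) := by
  classical
  have key := hfac x0 x1 y0 y1 m
  -- positivity of each factor at the point
  have hA : 0 < μ0 x0 y0 := by
    rcases (hμ00 x0 y0).lt_or_eq with h | h
    · exact h
    · exfalso; rw [key, ← h] at hpos; simp at hpos
  have hB : 0 < μ1 x1 y1 := by
    rcases (hμ10 x1 y1).lt_or_eq with h | h
    · exact h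
    · exfalso; rw [key, ← h] at hpos; simp at hpos
  have hC : 0 < g1 (x0, x1) m := by
    rcases (hg1 (x0, x1) m).lt_or_eq with h | h
    · exact h
    · exfalso; rw [key, ← h] at hpos; simp at hpos
  have hD : 0 < g2 (y0, y1) m := by
    rcases (hg2 (y0, y1) m).lt_or_eq with h | h
    · exact h
    · exfalso; rw [key, ← h] at hpos; simp at hpos
  have hE : 0 < g3 x0 y1 m := by
    rcases (hg3 x0 y1 m).lt_or_eq with h | h
    · exact h
    · exfalso; rw [key, ← h] at hpos; simp at hpos
  -- positivity of the sums
  have hFpos : 0 < ∑ x1', μ1 x1' y1 * g1 (x0, x1') m :=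
    Finset.sum_pos' (fun i _ => mul_nonneg (hμ10 i y1) (hg1 (x0, i) m))
      ⟨x1, Finset.mem_univ x1, mul_pos hB hC⟩
  have hHpos : 0 < ∑ y0', μ0 x0 y0' * g2 (y0', y1) m :=
    Finset.sum_pos' (fun i _ => mul_nonneg (hμ00 x0 i) (hg2 (i, y1) m))
      ⟨y0, Finset.mem_univ y0, mul_pos hA hD⟩
  have hGpos : 0 < ∑ x0', μ0 x0' y0 * g3 x0' y1 m * ∑ x1', μ1 x1' y1 * g1 (x0', x1') m :=
    Finset.sum_pos'
      (fun i _ => mul_nonneg (mul_nonneg (hμ00 i y0) (hg3 i y1 m))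
        (Finset.sum_nonneg fun j _ => mul_nonneg (hμ10 j y1) (hg1 (i, j) m)))
      ⟨x0, Finset.mem_univ x0, mul_pos (mul_pos hA hE) hFpos⟩
  have hLpos : 0 < ∑ y1', μ1 x1 y1' * g3 x0 y1' m * ∑ y0', μ0 x0 y0' * g2 (y0', y1') m :=
    Finset.sum_pos'
      (fun i _ => mul_nonneg (mul_nonneg (hμ10 x1 i) (hg3 x0 i m))
        (Finset.sum_nonneg fun j _ => mul_nonneg (hμ00 x0 j) (hg2 (j, i) m)))
      ⟨y1, Finset.mem_univ y1, mul_pos (mul_pos hB hE) hHpos⟩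
  have hA0 : 0 < ∑ x0', μ0 x0' y0 :=
    Finset.sum_pos' (fun i _ => hμ00 i y0) ⟨x0, Finset.mem_univ x0, hA⟩
  have hB1 : 0 < ∑ x1', μ1 x1' y1 :=
    Finset.sum_pos' (fun i _ => hμ10 i y1) ⟨x1, Finset.mem_univ x1, hB⟩
  have hP : 0 < ∑ y0', μ0 x0 y0' :=
    Finset.sum_pos' (fun i _ => hμ00 x0 i) ⟨y0, Finset.mem_univ y0, hA⟩
  have hQ : 0 < ∑ y1', μ1 x1 y1' :=
    Finset.sum_pos' (fun i _ => hμ10 x1 i) ⟨y1, Finset.mem_univ y1, hB⟩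
  -- factorizations of the sums
  have e1 : (∑ x0', ∑ x1', π x0' x1' y0 y1 m)
      = g2 (y0, y1) m * ∑ x0', μ0 x0' y0 * g3 x0' y1 m * ∑ x1', μ1 x1' y1 * g1 (x0', x1') m := by
    simp only [hfac, Finset.mul_sum]
    exact Finset.sum_congr rfl fun a _ => Finset.sum_congr rfl fun b _ => by ring
  have e2 : (∑ x1', π x0 x1' y0 y1 m)
      = μ0 x0 y0 * g2 (y0, y1) m * g3 x0 y1 m * ∑ x1', μ1 x1' y1 * g1 (x0, x1') m := by
    simp only [hfac, Finset.mul_sum]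
    exact Finset.sum_congr rfl fun a _ => by ring
  have e3 : (∑ y0', π x0 x1 y0' y1 m)
      = μ1 x1 y1 * g1 (x0, x1) m * g3 x0 y1 m * ∑ y0', μ0 x0 y0' * g2 (y0', y1) m := by
    simp only [hfac, Finset.mul_sum]
    exact Finset.sum_congr rfl fun a _ => by ring
  have e4 : (∑ x1', ∑ y0', π x0 x1' y0' y1 m)
      = g3 x0 y1 m * ((∑ x1', μ1 x1' y1 * g1 (x0, x1') m) * ∑ y0', μ0 x0 y0' * g2 (y0', y1) m) := by
    simp only [hfac, Finset.mul_sum, Finset.sum_mul]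
    rw [Finset.sum_comm]
    exact Finset.sum_congr rfl fun a _ => Finset.sum_congr rfl fun b _ => by ring
  have e5 : (∑ y0', ∑ y1', π x0 x1 y0' y1' m)
      = g1 (x0, x1) m * ∑ y1', μ1 x1 y1' * g3 x0 y1' m * ∑ y0', μ0 x0 y0' * g2 (y0', y1') m := by
    rw [Finset.sum_comm]
    simp only [hfac, Finset.mul_sum]
    exact Finset.sum_congr rfl fun a _ => Finset.sum_congr rfl fun b _ => by ring
  rw [key, e1, e2, e3, e4, e5]
  constructor
  · field_simp
  · field_simp
end

section
/- Let π be a probability mass function on 𝒳0 × 𝒳1 × 𝒴0 × 𝒴1 × ℳ (all sets finite) having the rectangle property with respect to the product μ0 ⊗ μ1: π(x, y, m) = μ0(x0, y0) · μ1(x1, y1) · g1(x, m) · g2(y, m) for nonnegative functions g1, g2, where x = (x0, x1), y = (y0, y1). Let f0 : 𝒳0 × 𝒴0 → {0,1} and f1 : 𝒳1 × 𝒴1 → {0,1}. Then for every (x0, y1, m) with π(X0 = x0, Y1 = y1, M = m) > 0: adv^π( f0(X0, Y0) | x0, y1, m ) · adv^π( f1(X1, Y1) | x0, y1, m ) = adv^π(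 f0(X0, Y0) ⊕ f1(X1, Y1) | x0, y1, m ). -/
/-- **Multiplicity of conditional advantages under the rectangle property.**
Let `π` be a pmf on `𝒳0 × 𝒳1 × 𝒴0 × 𝒴1 × ℳ` (curried) with the rectangle property with
respect to `μ0 ⊗ μ1`, and let `f0, f1` be `Bool`-valued (with `false` playing the role of `0`).
Then for every `(x0, y1, m)` of positive marginal probability, the product of the conditional
advantages of `f0(X0, Y0)` and `f1(X1, Y1)` given `(X0, Y1, M) = (x0, y1, m)` equals the
conditional advantage of `f0(X0, Y0) ⊕ f1(X1, Y1)`. -/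
theorem stmt7 {X0 X1 Y0 Y1 M : Type*}
    [Fintype X0] [Fintype X1] [Fintype Y0] [Fintype Y1] [Fintype M]
    (π : X0 → X1 → Y0 → Y1 → M → ℝ)
    (hπ0 : ∀ x0 x1 y0 y1 m, 0 ≤ π x0 x1 y0 y1 m)
    (hπ1 : (∑ x0, ∑ x1, ∑ y0, ∑ y1, ∑ m, π x0 x1 y0 y1 m) = 1)
    (μ0 : X0 → Y0 → ℝ) (μ1 : X1 → Y1 → ℝ)
    (hμ00 : ∀ x0 y0, 0 ≤ μ0 x0 y0) (hμ01 : (∑ x0, ∑ y0, μ0 x0 y0) = 1)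
    (hμ10 : ∀ x1 y1, 0 ≤ μ1 x1 y1) (hμ11 : (∑ x1, ∑ y1, μ1 x1 y1) = 1)
    (g1 : X0 × X1 → M → ℝ) (g2 : Y0 × Y1 → M → ℝ)
    (hg1 : ∀ x m, 0 ≤ g1 x m) (hg2 : ∀ y m, 0 ≤ g2 y m)
    (hfac : ∀ x0 x1 y0 y1 m,
      π x0 x1 y0 y1 m = μ0 x0 y0 * μ1 x1 y1 * g1 (x0, x1) m * g2 (y0, y1) m)
    (f0 : X0 → Y0 → Bool) (f1 : X1 → Y1 → Bool)
    (x0 : X0) (y1 : Y1) (m : M)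
    (hpos : 0 < ∑ x1, ∑ y0, π x0 x1 y0 y1 m) :
    |2 * ((∑ x1, ∑ y0, if f0 x0 y0 = false then π x0 x1 y0 y1 m else 0) /
        (∑ x1, ∑ y0, π x0 x1 y0 y1 m)) - 1| *
      |2 * ((∑ x1, ∑ y0, if f1 x1 y1 = false then π x0 x1 y0 y1 m else 0) /
        (∑ x1, ∑ y0, π x0 x1 y0 y1 m)) - 1| =
    |2 * ((∑ x1, ∑ y0, if Bool.xor (f0 x0 y0) (f1 x1 y1) = false then π x0 x1 y0 y1 m else 0) /
        (∑ x1, ∑ y0, π x0 x1 y0 y1 m)) - 1| := by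

  set a : Y0 → ℝ := fun y0 => μ0 x0 y0 * g2 (y0, y1) m with ha
  set b : X1 → ℝ := fun x1 => μ1 x1 y1 * g1 (x0, x1) m with hb
  have hab : ∀ x1 y0, π x0 x1 y0 y1 m = a y0 * b x1 := by
    intro x1 y0; rw [hfac]; simp [ha, hb]; ring
  have ha0 : ∀ y0, 0 ≤ a y0 := fun y0 => mul_nonneg (hμ00 _ _) (hg2 _ _)
  have hb0 : ∀ x1, 0 ≤ b x1 := fun x1 => mul_nonneg (hμ10 _ _) (hg1 _ _)
  set A : ℝ := ∑ y0, a y0 with hA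
  set B : ℝ := ∑ x1, b x1 with hB
  set A0 : ℝ := ∑ y0, if f0 x0 y0 = false then a y0 else 0 with hA0
  set B0 : ℝ := ∑ x1, if f1 x1 y1 = false then b x1 else 0 with hB0
  have hS : (∑ x1, ∑ y0, π x0 x1 y0 y1 m) = A * B := by
    simp_rw [hab]
    rw [Finset.sum_comm]
    rw [← Finset.sum_mul_sum]
  have hN0 : (∑ x1, ∑ y0, if f0 x0 y0 = false then π x0 x1 y0 y1 m else 0) = A0 * B := by
    simp_rw [hab]
    have : ∀ x1 y0, (if f0 x0 y0 = false then a y0 * b x1 else 0)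
        = (if f0 x0 y0 = false then a y0 else 0) * b x1 := by
      intro x1 y0; by_cases h : f0 x0 y0 = false <;> simp [h]
    simp_rw [this]
    rw [Finset.sum_comm]
    rw [← Finset.sum_mul_sum]
  have hN1 : (∑ x1, ∑ y0, if f1 x1 y1 = false then π x0 x1 y0 y1 m else 0) = A * B0 := by
    simp_rw [hab]
    have : ∀ x1 y0, (if f1 x1 y1 = false then a y0 * b x1 else 0)
        = a y0 * (if f1 x1 y1 = false then b x1 else 0) := by
      intro x1 y0; by_cases h : f1 x1 y1 = false <;> simp [h]
    simp_rw [this]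
    rw [Finset.sum_comm]
    rw [← Finset.sum_mul_sum]
  have hNx : (∑ x1, ∑ y0, if Bool.xor (f0 x0 y0) (f1 x1 y1) = false then π x0 x1 y0 y1 m else 0)
      = A0 * B0 + (A - A0) * (B - B0) := by
    simp_rw [hab]
    have : ∀ x1 y0, (if Bool.xor (f0 x0 y0) (f1 x1 y1) = false then a y0 * b x1 else 0)
        = (if f0 x0 y0 = false then a y0 else 0) * (if f1 x1 y1 = false then b x1 else 0)
          + (a y0 - (if f0 x0 y0 = false then a y0 else 0))
            * (b x1 - (if f1 x1 y1 = false then b x1 else 0)) := by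
      intro x1 y0
      cases h0 : f0 x0 y0 <;> cases h1 : f1 x1 y1 <;> simp <;> ring
    simp_rw [this, Finset.sum_add_distrib]
    congr 1
    · rw [Finset.sum_comm, ← Finset.sum_mul_sum]
    · rw [Finset.sum_comm, ← Finset.sum_mul_sum]
      simp [Finset.sum_sub_distrib, hA, hB, hA0, hB0]
  rw [hS] at hpos
  rw [hS, hN0, hN1, hNx]
  have hApos : 0 < A := by
    rcases (mul_pos_iff.mp hpos) with ⟨h1, h2⟩ | ⟨h1, h2⟩
    · exact h1
    · exact absurd h1 (not_lt.mpr (Finset.sum_nonneg fun y0 _ => ha0 y0))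
  have hBpos : 0 < B := by
    rcases (mul_pos_iff.mp hpos) with ⟨h1, h2⟩ | ⟨h1, h2⟩
    · exact h2
    · exact absurd h1 (not_lt.mpr (Finset.sum_nonneg fun y0 _ => ha0 y0))
  have e1 : 2 * (A0 * B / (A * B)) - 1 = (2 * A0 - A) / A := by
    field_simp
  have e2 : 2 * (A * B0 / (A * B)) - 1 = (2 * B0 - B) / B := by
    field_simp
  have e3 : 2 * ((A0 * B0 + (A - A0) * (B - B0)) / (A * B)) - 1
      = ((2 * A0 - A) * (2 * B0 - B)) / (A * B) := by
    field_simp; ring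
  rw [e1, e2, e3, abs_div, abs_div, abs_div, abs_of_pos hApos, abs_of_pos hBpos,
    abs_of_pos (mul_pos hApos hBpos), abs_mul, div_mul_div_comm]
end

section
/- Let F be a {0,1}-valued random variable and U a random variable taking finitely many values on a probability space with measure π. For each value u with π(U = u) > 0, define Z(u) := |2·π(F = 0 | U = u) − 1|. Let α ∈ [0,1] and let W be the event {Z(U) ≥ α}, and assume π(W) > 0. Then E[ Z(U) | W ] ≥ |2·π(F = 0) − 1|. -/
/-!
Write `p u = π(U = u)` and `q u = π(F = 0, U = u)`. Then `2π(F = 0) − 1 = ∑ (2 q u − p u)` and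
`|2 q u − p u| = p u · Z u`, so the triangle inequality gives `|2π(F = 0) − 1| ≤ E[Z(U)]`.
Conditioning any real random variable `X` on a superlevel set `W = {X ≥ α}` can only raise its
mean: `E[X] ≤ E[X; W] + α (1 − π W)` and `E[X; W] ≥ α π W`.
-/

open MeasureTheory ProbabilityTheory

section
variable {Ω : Type*} [MeasurableSpace Ω] {μ : Measure Ω}

theorem integral_le_setAverage_superlevelSet [IsProbabilityMeasure μ] {X : Ω → ℝ}
    (hX : Integrable X μ) {α : ℝ} (hWm : MeasurableSet {ω | α ≤ X ω})
    (hW : μ {ω | α ≤ X ω} ≠ 0) :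
    ∫ ω, X ω ∂μ ≤ ⨍ ω in {ω | α ≤ X ω}, X ω ∂μ := by
  set W := {ω | α ≤ X ω}
  have hI : α * μ.real W ≤ ∫ ω in W, X ω ∂μ :=
    setIntegral_ge_of_const_le_real hWm (measure_ne_top _ _) (fun _ h => h) hX.integrableOn
  have hJ : ∫ ω in Wᶜ, X ω ∂μ ≤ α * μ.real Wᶜ := by
    rw [mul_comm, ← smul_eq_mul, ← setIntegral_const]
    exact setIntegral_mono_on hX.integrableOn (integrableOn_const (measure_ne_top _ _))
      hWm.compl fun _ h => le_of_not_ge h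
  have hs : 0 < μ.real W := ENNReal.toReal_pos hW (measure_ne_top _ _)
  have hs1 : μ.real W ≤ 1 := measureReal_le_one
  rw [measureReal_compl hWm, probReal_univ] at hJ
  rw [setAverage_eq, smul_eq_mul, le_inv_mul_iff₀ hs, ← integral_add_compl hWm hX]
  -- With `I = ∫ ω in W, X ω ∂μ` and `s = μ.real W`: `E[X] ≤ I + α (1 - s)` and `α s ≤ I`,
  -- so `I / s - E[X] ≥ (1 - s) (I - α s) / s ≥ 0`.
  nlinarith [mul_nonneg (sub_nonneg.2 hI) (sub_nonneg.2 hs1)]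

theorem integral_comp_eq_sum_measureReal_preimage {S : Type*} [Fintype S] [MeasurableSpace S]
    [MeasurableSingletonClass S] [IsFiniteMeasure μ] {U : Ω → S} (hU : Measurable U)
    (Z : S → ℝ) : ∫ ω, Z (U ω) ∂μ = ∑ u, μ.real (U ⁻¹' {u}) * Z u := by
  rw [← integral_map hU.aemeasurable (measurable_of_finite Z).aestronglyMeasurable,
    integral_fintype .of_finite]
  simp [map_measureReal_apply hU (measurableSet_singleton _)]

theorem sum_measureReal_inter_preimage_singleton {S : Type*} [Fintype S] [IsFiniteMeasure μ]
    {U : Ω → S} (hU : ∀ u, MeasurableSet (U ⁻¹' {u})) {B : Set Ω} (hB : MeasurableSet B) :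
    ∑ u, μ.real (B ∩ U ⁻¹' {u}) = μ.real B := by
  simp_rw [Set.inter_comm B, ← measureReal_restrict_apply' hB]
  rw [sum_measureReal_preimage_singleton _ fun u _ => hU u]
  simp [measureReal_restrict_apply' hB]

theorem abs_two_mul_measureReal_sub_one_le_sum {S : Type*} [Fintype S] [IsProbabilityMeasure μ]
    {A : Set Ω} (hA : MeasurableSet A) {U : Ω → S} (hU : ∀ u, MeasurableSet (U ⁻¹' {u}))
    {Z : S → ℝ} (hZ : ∀ u, μ (U ⁻¹' {u}) ≠ 0 →
      Z u = |2 * (μ.real (A ∩ U ⁻¹' {u}) / μ.real (U ⁻¹' {u})) - 1|) :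
    |2 * μ.real A - 1| ≤ ∑ u, μ.real (U ⁻¹' {u}) * Z u := by
  set p := fun u => μ.real (U ⁻¹' {u})
  set q := fun u => μ.real (A ∩ U ⁻¹' {u})
  have hdecomp : 2 * μ.real A - 1 = ∑ u, (2 * q u - p u) := by
    have hp : ∑ u, p u = 1 := by
      simpa using sum_measureReal_inter_preimage_singleton (μ := μ) hU MeasurableSet.univ
    rw [Finset.sum_sub_distrib, ← Finset.mul_sum, hp,
      sum_measureReal_inter_preimage_singleton hU hA]
  have hfiber : ∀ u, |2 * q u - p u| ≤ p u * Z u := by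
    intro u
    by_cases h : μ (U ⁻¹' {u}) = 0
    · have hp : p u = 0 := by simp [p, measureReal_def, h]
      have hq : q u = 0 := measureReal_mono_null Set.inter_subset_right hp
      simp [hp, hq]
    · have hp : 0 < p u := ENNReal.toReal_pos h (measure_ne_top _ _)
      rw [hZ u h]
      refine le_of_eq ?_
      calc |2 * q u - p u| = |p u * (2 * (q u / p u) - 1)| := by congr 1; field_simp
        _ = p u * |2 * (q u / p u) - 1| := by rw [abs_mul, abs_of_pos hp]
  rw [hdecomp]
  exact (Finset.abs_sum_le_sum_abs _ _).trans (Finset.sum_le_sum fun u _ => hfiber u)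

end

theorem stmt8_general {Ω S : Type*} [MeasurableSpace Ω] [Fintype S]
    (π : Measure Ω) [IsProbabilityMeasure π]
    (F : Ω → Bool) (U : Ω → S)
    (hF : MeasurableSet {ω | F ω = false}) (hU : ∀ u, MeasurableSet {ω | U ω = u})
    (Z : S → ℝ)
    (hZ : ∀ u : S, π {ω | U ω = u} ≠ 0 →
      Z u = |2 * ((π ({ω | F ω = false} ∩ {ω | U ω = u})).toReal /
        (π {ω | U ω = u}).toReal) - 1|)
    (α : ℝ)
    (hW : π {ω | α ≤ Z (U ω)} ≠ 0) :
    |2 * (π {ω | F ω = false}).toReal - 1| ≤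
      (∫ ω in {ω | α ≤ Z (U ω)}, Z (U ω) ∂π) / (π {ω | α ≤ Z (U ω)}).toReal := by
  let _ : MeasurableSpace S := ⊤
  have hUm : Measurable U := measurable_to_countable' hU
  have hX : Measurable fun ω => Z (U ω) := (measurable_of_finite Z).comp hUm
  have hXi : Integrable (fun ω => Z (U ω)) π :=
    Integrable.comp_measurable .of_finite hUm
  calc |2 * π.real {ω | F ω = false} - 1|
      ≤ ∑ u, π.real (U ⁻¹' {u}) * Z u := abs_two_mul_measureReal_sub_one_le_sum hF hU hZ
    _ = ∫ ω, Z (U ω) ∂π := (integral_comp_eq_sum_measureReal_preimage hUm Z).symm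
    _ ≤ ⨍ ω in {ω | α ≤ Z (U ω)}, Z (U ω) ∂π :=
        integral_le_setAverage_superlevelSet hXi (measurableSet_le measurable_const hX) hW
    _ = _ := by rw [setAverage_eq, smul_eq_mul, div_eq_inv_mul]; rfl

/-- **The conditional advantage, conditioned on being large, dominates the advantage.**
Let `F` be a `Bool`-valued random variable (with `false` playing the role of `0`) and `U` a
random variable taking finitely many values.  For each `u` of positive probability let
`Z u = |2·π(F = 0 ∣ U = u) − 1|` be the conditional advantage.  If `W = {Z(U) ≥ α}` has
positive probability (for `α ∈ [0,1]`), then `E[Z(U) ∣ W] ≥ |2·π(F = 0) − 1|`. -/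
theorem stmt8 {Ω S : Type*} [MeasurableSpace Ω] [Fintype S]
    (π : Measure Ω) [IsProbabilityMeasure π]
    (F : Ω → Bool) (U : Ω → S)
    (hF : MeasurableSet {ω | F ω = false}) (hU : ∀ u, MeasurableSet {ω | U ω = u})
    (Z : S → ℝ)
    (hZ : ∀ u : S, π {ω | U ω = u} ≠ 0 →
      Z u = |2 * ((π ({ω | F ω = false} ∩ {ω | U ω = u})).toReal /
        (π {ω | U ω = u}).toReal) - 1|)
    (α : ℝ) (hα : α ∈ Set.Icc (0 : ℝ) 1)
    (hW : π {ω | α ≤ Z (U ω)} ≠ 0) :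
    |2 * (π {ω | F ω = false}).toReal - 1| ≤
      (∫ ω in {ω | α ≤ Z (U ω)}, Z (U ω) ∂π) / (π {ω | α ≤ Z (U ω)}).toReal :=
  stmt8_general π F U hF hU Z hZ α hW
end

section
/- Let A0 and A1 be random variables taking values in [0,1] on a probability space, let α ∈ (0,1], and let W be an event of positive probability such that A0·A1 ≥ α holds everywhere on W. Then (1 − E[A0 | W]) + (1 − E[A1 | W]) ≤ (2 / (1 + √α)) · (1 − E[A0·A1 | W]). -/
/-!
Pointwise on `W`, with `z = A0 * A1 ∈ [α, 1]`, AM-GM and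
`(1 - √z) (√z - √α) ≥ 0` give `2 (z + √α) ≤ (1 + √α) (A0 + A1)`. Averaging this over `W`, i.e.
integrating against the conditional probability measure `π[|W]`, gives the claim.
-/

open MeasureTheory ProbabilityTheory Set

theorem two_mul_sqrt_mul_le_add {a b : ℝ} (ha : 0 ≤ a) (hb : 0 ≤ b) :
    2 * √(a * b) ≤ a + b := by
  rw [Real.sqrt_mul ha]
  nlinarith [sq_nonneg (√a - √b), Real.sq_sqrt ha, Real.sq_sqrt hb]

theorem add_sqrt_le_sqrt_mul_one_add_sqrt {α z : ℝ} (hz₀ : 0 ≤ z) (hαz : α ≤ z) (hz₁ : z ≤ 1) :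
    z + √α ≤ √z * (1 + √α) := by
  have h₁ : √z ≤ 1 := Real.sqrt_le_one.mpr hz₁
  have h₂ : √α ≤ √z := Real.sqrt_le_sqrt hαz
  nlinarith [mul_nonneg (sub_nonneg.mpr h₁) (sub_nonneg.mpr h₂), Real.sq_sqrt hz₀]

theorem two_mul_mul_add_sqrt_le {a b α : ℝ} (ha : a ∈ Icc (0 : ℝ) 1) (hb : b ∈ Icc (0 : ℝ) 1)
    (hα : α ≤ a * b) : 2 * (a * b + √α) ≤ (1 + √α) * (a + b) := by
  have hab₀ : 0 ≤ a * b := mul_nonneg ha.1 hb.1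
  have hab₁ : a * b ≤ 1 := mul_le_one₀ ha.2 hb.1 hb.2
  calc 2 * (a * b + √α) ≤ 2 * (√(a * b) * (1 + √α)) := by
        gcongr; exact add_sqrt_le_sqrt_mul_one_add_sqrt hab₀ hα hab₁
    _ = (1 + √α) * (2 * √(a * b)) := by ring
    _ ≤ (1 + √α) * (a + b) := by gcongr; exact two_mul_sqrt_mul_le_add ha.1 hb.1

theorem one_sub_integral_add_one_sub_integral_le {Ω : Type*} [MeasurableSpace Ω]
    {μ : Measure Ω} [IsProbabilityMeasure μ] {X Y : Ω → ℝ} {α : ℝ}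
    (hXm : AEMeasurable X μ) (hYm : AEMeasurable Y μ)
    (hX : ∀ᵐ ω ∂μ, X ω ∈ Icc (0 : ℝ) 1) (hY : ∀ᵐ ω ∂μ, Y ω ∈ Icc (0 : ℝ) 1)
    (hXY : ∀ᵐ ω ∂μ, α ≤ X ω * Y ω) :
    (1 - ∫ ω, X ω ∂μ) + (1 - ∫ ω, Y ω ∂μ) ≤ 2 / (1 + √α) * (1 - ∫ ω, X ω * Y ω ∂μ) := by
  have hXi : Integrable X μ := .of_mem_Icc 0 1 hXm hX
  have hYi : Integrable Y μ := .of_mem_Icc 0 1 hYm hY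
  have hXYi : Integrable (fun ω ↦ X ω * Y ω) μ := by
    refine .of_mem_Icc 0 1 (hXm.mul hYm) ?_
    filter_upwards [hX, hY] with ω hXω hYω
    exact ⟨mul_nonneg hXω.1 hYω.1, mul_le_one₀ hXω.2 hYω.1 hYω.2⟩
  have hmean : 2 * ((∫ ω, X ω * Y ω ∂μ) + √α) ≤ (1 + √α) * ((∫ ω, X ω ∂μ) + ∫ ω, Y ω ∂μ) := by
    have hpt : ∀ᵐ ω ∂μ, 2 * (X ω * Y ω + √α) ≤ (1 + √α) * (X ω + Y ω) := by
      filter_upwards [hX, hY, hXY] with ω hXω hYω hXYω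
      exact two_mul_mul_add_sqrt_le hXω hYω hXYω
    have := integral_mono_ae (f := fun ω ↦ 2 * (X ω * Y ω + √α))
      (g := fun ω ↦ (1 + √α) * (X ω + Y ω)) ((hXYi.add (integrable_const _)).const_mul 2)
      ((hXi.add hYi).const_mul _) hpt
    rwa [integral_const_mul, integral_const_mul, integral_add hXYi (integrable_const _),
      integral_add hXi hYi, integral_const, probReal_univ, one_smul] at this
  rw [div_mul_eq_mul_div, le_div_iff₀ (by positivity)]
  linarith

theorem integral_cond_eq_setIntegral_div {Ω : Type*} [MeasurableSpace Ω] (μ : Measure Ω)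
    (s : Set Ω) (f : Ω → ℝ) : ∫ ω, f ω ∂μ[|s] = (∫ ω in s, f ω ∂μ) / (μ s).toReal := by
  rw [ProbabilityTheory.cond, integral_smul_measure, ENNReal.toReal_inv, smul_eq_mul, inv_mul_eq_div]

theorem stmt9_general {Ω : Type*} [MeasurableSpace Ω] (π : Measure Ω) [IsProbabilityMeasure π]
    (A0 A1 : Ω → ℝ) (hA0m : Measurable A0) (hA1m : Measurable A1)
    (hA0 : ∀ ω, A0 ω ∈ Set.Icc (0 : ℝ) 1) (hA1 : ∀ ω, A1 ω ∈ Set.Icc (0 : ℝ) 1)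
    (α : ℝ)
    (W : Set Ω) (hWm : MeasurableSet W) (hW : π W ≠ 0)
    (hprod : ∀ ω ∈ W, α ≤ A0 ω * A1 ω) :
    (1 - (∫ ω in W, A0 ω ∂π) / (π W).toReal) + (1 - (∫ ω in W, A1 ω ∂π) / (π W).toReal) ≤
      (2 / (1 + Real.sqrt α)) * (1 - (∫ ω in W, A0 ω * A1 ω ∂π) / (π W).toReal) := by
  have : IsProbabilityMeasure π[|W] := cond_isProbabilityMeasure hW
  simp only [← integral_cond_eq_setIntegral_div]
  exact one_sub_integral_add_one_sub_integral_le hA0m.aemeasurable hA1m.aemeasurable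
    (.of_forall hA0) (.of_forall hA1) (ae_cond_of_forall_mem hWm hprod)

/-- **Disadvantage decomposition bound (Claim on ε₀ + ε₁).**
Let `A0, A1` be `[0,1]`-valued random variables, `α ∈ (0,1]`, and `W` an event of positive
probability on which `A0·A1 ≥ α` holds everywhere.  Then
`(1 − E[A0 ∣ W]) + (1 − E[A1 ∣ W]) ≤ (2/(1+√α)) · (1 − E[A0·A1 ∣ W])`,
where `E[X ∣ W] = (∫_W X dπ)/π(W)`. -/
theorem stmt9 {Ω : Type*} [MeasurableSpace Ω] (π : Measure Ω) [IsProbabilityMeasure π]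
    (A0 A1 : Ω → ℝ) (hA0m : Measurable A0) (hA1m : Measurable A1)
    (hA0 : ∀ ω, A0 ω ∈ Set.Icc (0 : ℝ) 1) (hA1 : ∀ ω, A1 ω ∈ Set.Icc (0 : ℝ) 1)
    (α : ℝ) (hα : α ∈ Set.Ioc (0 : ℝ) 1)
    (W : Set Ω) (hWm : MeasurableSet W) (hW : π W ≠ 0)
    (hprod : ∀ ω ∈ W, α ≤ A0 ω * A1 ω) :
    (1 - (∫ ω in W, A0 ω ∂π) / (π W).toReal) + (1 - (∫ ω in W, A1 ω ∂π) / (π W).toReal) ≤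
      (2 / (1 + Real.sqrt α)) * (1 - (∫ ω in W, A0 ω * A1 ω ∂π) / (π W).toReal) :=
  stmt9_general π A0 A1 hA0m hA1m hA0 hA1 α W hWm hW hprod
end

section
/- Let A, B, C be random variables taking finitely many values on a probability space with measure π, and let E be an event with π(E) = p > 0. Then I(A : B | C, E) ≤ (1/p) · ( I(A : B | C) + H(p) ), where I(A : B | C, E) denotes the conditional mutual information of A and B given C computed with respect to the conditional measure π(· | E), I(A : B | C) is computed with respect to π, and H is the binary entropy function. -/
open MeasureTheory ProbabilityTheory

/-- Discrete conditional Shannon entropy `H(A ∣ C)` (in bits) of finitely-valued random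
variables with respect to a measure `π`:
`H(A ∣ C) = Σ_{a,c} −π(A = a, C = c)·log₂( π(A = a, C = c)/π(C = c) )`. -/
noncomputable def condEnt {Ω S T : Type*} [MeasurableSpace Ω] [Fintype S] [Fintype T]
    (π : Measure Ω) (A : Ω → S) (C : Ω → T) : ℝ :=
  ∑ a : S, ∑ c : T,
    -((π ({ω | A ω = a} ∩ {ω | C ω = c})).toReal *
      Real.logb 2
        ((π ({ω | A ω = a} ∩ {ω | C ω = c})).toReal / (π {ω | C ω = c}).toReal))

/-- Discrete conditional mutual information `I(A : B ∣ C) = H(A ∣ C) − H(A ∣ B, C)` (in bits). -/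
noncomputable def condMI {Ω S T U : Type*} [MeasurableSpace Ω]
    [Fintype S] [Fintype T] [Fintype U]
    (π : Measure Ω) (A : Ω → S) (B : Ω → T) (C : Ω → U) : ℝ :=
  condEnt π A C - condEnt π A (fun ω => (B ω, C ω))

/-- The binary entropy function, `H(p) = p·log₂(1/p) + (1−p)·log₂(1/(1−p))`,
with `H 0 = H 1 = 0` under the conventions of `Real.logb`. -/
noncomputable def binEnt (p : ℝ) : ℝ :=
  p * Real.logb 2 (1 / p) + (1 - p) * Real.logb 2 (1 / (1 - p))

/-!
Let `Z` be the indicator of `E`. Mutual information scales with the measure, and conditioning on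
`(Z, C)` splits it over the restrictions of `π` to `E` and `Eᶜ`, so
`p · I_{π[|E]}(A : B | C) ≤ H(A | Z, C) - H(A | Z, B, C)`.
Conditioning reduces entropy, so `H(A | Z, C) ≤ H(A | C)` and `H(Z | B, C) ≤ H(Z) = H(p)`;
moreover `H(A | B, C) ≤ H(Z | B, C) + H(A | Z, B, C)`. That conditioning reduces entropy is the
log-sum inequality, i.e. Jensen's inequality for the concave `x ↦ -x log x`, on each fibre.
-/

open scoped ENNReal

namespace Real

theorem log_sum_inequality {ι : Type*} (s : Finset ι) {m k : ι → ℝ}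
    (hm : ∀ i ∈ s, 0 ≤ m i) (hk : ∀ i ∈ s, 0 ≤ k i) (hmk : ∀ i ∈ s, k i = 0 → m i = 0) :
    (∑ i ∈ s, m i) * log ((∑ i ∈ s, m i) / ∑ i ∈ s, k i) ≤ ∑ i ∈ s, m i * log (m i / k i) := by
  rcases (Finset.sum_nonneg hk).eq_or_lt with hK | hK
  · have hk0 : ∀ i ∈ s, k i = 0 := (Finset.sum_eq_zero_iff_of_nonneg hk).1 hK.symm
    rw [← hK, div_zero, log_zero, mul_zero, Finset.sum_eq_zero fun i hi => by simp [hk0 i hi]]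
  set K := ∑ i ∈ s, k i
  -- Jensen for `negMulLog` with weights `k i / K` at the points `m i / k i`
  have hterm : ∀ i ∈ s, k i / K * negMulLog (m i / k i) = -(m i * log (m i / k i)) / K := by
    intro i hi
    rcases (hk i hi).eq_or_lt with h | h
    · simp [← h, hmk i hi h.symm]
    · rw [negMulLog]; field_simp
  have hpoint : ∀ i ∈ s, k i / K * (m i / k i) = m i / K := by
    intro i hi
    rcases (hk i hi).eq_or_lt with h | h
    · simp [← h, hmk i hi h.symm]
    · field_simp
  have hjensen := concaveOn_negMulLog.le_map_sum (t := s) (w := fun i => k i / K)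
    (p := fun i => m i / k i) (fun i hi => div_nonneg (hk i hi) hK.le)
    (by rw [← Finset.sum_div, div_self hK.ne']) (fun i hi => div_nonneg (hm i hi) (hk i hi))
  simp only [smul_eq_mul] at hjensen
  rw [Finset.sum_congr rfl hterm, Finset.sum_congr rfl hpoint, ← Finset.sum_div, ← Finset.sum_div,
    negMulLog, div_le_iff₀ hK] at hjensen
  field_simp at hjensen
  rw [Finset.sum_neg_distrib] at hjensen
  linarith

theorem sum_neg_mul_logb_div_le {ι : Type*} (s : Finset ι) {b : ℝ} (hb : 1 < b) {m k : ι → ℝ}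
    (hm : ∀ i ∈ s, 0 ≤ m i) (hk : ∀ i ∈ s, 0 ≤ k i) (hmk : ∀ i ∈ s, k i = 0 → m i = 0) :
    ∑ i ∈ s, -(m i * logb b (m i / k i)) ≤
      -((∑ i ∈ s, m i) * logb b ((∑ i ∈ s, m i) / ∑ i ∈ s, k i)) := by
  simp only [logb, ← mul_div_assoc, ← neg_div, ← Finset.sum_div]
  gcongr
  · exact (log_pos hb).le
  · rw [Finset.sum_neg_distrib, neg_le_neg_iff]
    exact log_sum_inequality s hm hk hmk

theorem neg_mul_logb_div_le_add {b m m' k n : ℝ} (hb : 1 < b) (hm : 0 ≤ m) (hmm' : m ≤ m')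
    (hmk : m ≤ k) (hkn : k ≤ n) :
    -(m * logb b (m' / n)) ≤ -(m * logb b (k / n)) + -(m * logb b (m / k)) := by
  rcases hm.eq_or_lt with rfl | hm
  · simp
  have hk : 0 < k := hm.trans_le hmk
  have hn : 0 < n := hk.trans_le hkn
  have hsplit : k / n * (m / k) = m / n := by field_simp
  rw [← neg_add, ← mul_add, ← logb_mul (by positivity) (by positivity), hsplit, neg_le_neg_iff]
  gcongr

end Real

section

variable {Ω S T U V : Type*}

theorem setOf_prodMk_eq (X : Ω → S) (Y : Ω → T) (x : S) (y : T) :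
    {ω | (X ω, Y ω) = (x, y)} = {ω | X ω = x} ∩ {ω | Y ω = y} := by
  ext ω; simp

variable [MeasurableSpace Ω]

theorem measurableSet_setOf_prodMk_eq {X : Ω → S} {Y : Ω → T}
    (hX : ∀ x, MeasurableSet {ω | X ω = x}) (hY : ∀ y, MeasurableSet {ω | Y ω = y})
    (q : S × T) : MeasurableSet {ω | (X ω, Y ω) = q} := by
  rw [setOf_prodMk_eq]
  exact (hX q.1).inter (hY q.2)

theorem sum_measure_fiber_inter_toReal (μ : Measure Ω) [IsFiniteMeasure μ] {W : Ω → T}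
    (hW : ∀ w, MeasurableSet {ω | W ω = w}) (t : Finset T) (s : Set Ω) :
    ∑ w ∈ t, (μ ({ω | W ω = w} ∩ s)).toReal = (μ ({ω | W ω ∈ t} ∩ s)).toReal := by
  have := sum_measureReal_preimage_singleton (μ := μ.restrict s) t (fun w _ => hW w)
  have ht : MeasurableSet {ω | W ω ∈ t} := by
    convert t.measurableSet_biUnion fun w _ => hW w
    ext; simp
  simp only [Set.preimage, Set.mem_singleton_iff, Finset.mem_coe] at this
  simpa only [measureReal_def, Measure.restrict_apply (hW _), Measure.restrict_apply ht] using this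

theorem sum_measure_fiber_inter_toReal_univ (μ : Measure Ω) [IsFiniteMeasure μ] [Fintype T]
    {W : Ω → T} (hW : ∀ w, MeasurableSet {ω | W ω = w}) (s : Set Ω) :
    ∑ w, (μ ({ω | W ω = w} ∩ s)).toReal = (μ s).toReal := by
  simpa using sum_measure_fiber_inter_toReal μ hW Finset.univ s

theorem condEnt_le_condEnt_comp (μ : Measure Ω) [IsFiniteMeasure μ] [Fintype S] [Fintype T]
    [Fintype U] (X : Ω → S) {W : Ω → T} (hW : ∀ w, MeasurableSet {ω | W ω = w}) (f : T → U) :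
    condEnt μ X W ≤ condEnt μ X (fun ω => f (W ω)) := by
  classical
  refine Finset.sum_le_sum fun x _ => ?_
  rw [← Finset.sum_fiberwise Finset.univ f]
  refine Finset.sum_le_sum fun u _ => ?_
  have hfiber : ∀ s : Set Ω, {ω | f (W ω) = u} ∩ s =
      {ω | W ω ∈ Finset.univ.filter (f · = u)} ∩ s := by
    intro s; ext; simp
  rw [Set.inter_comm, hfiber, ← sum_measure_fiber_inter_toReal μ hW,
    ← Set.inter_univ {ω | f (W ω) = u}, hfiber, ← sum_measure_fiber_inter_toReal μ hW]
  simp only [Set.inter_univ, Set.inter_comm {ω | X ω = x}]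
  refine Real.sum_neg_mul_logb_div_le _ one_lt_two (fun _ _ => ENNReal.toReal_nonneg)
    (fun _ _ => ENNReal.toReal_nonneg) fun w _ hw => ?_
  exact le_antisymm (hw ▸ measureReal_mono Set.inter_subset_left) measureReal_nonneg

theorem condEnt_le_condEnt_add_condEnt_prod (μ : Measure Ω) [IsFiniteMeasure μ] [Fintype S]
    [Fintype T] [Fintype U] {X : Ω → S} {Y : Ω → T} (W : Ω → U)
    (hX : ∀ x, MeasurableSet {ω | X ω = x}) (hY : ∀ y, MeasurableSet {ω | Y ω = y}) :
    condEnt μ X W ≤ condEnt μ Y W + condEnt μ X (fun ω => (Y ω, W ω)) := by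
  let m x y w := (μ ({ω | X ω = x} ∩ ({ω | Y ω = y} ∩ {ω | W ω = w}))).toReal
  have hXW : ∀ x w, (μ ({ω | X ω = x} ∩ {ω | W ω = w})).toReal = ∑ y, m x y w := fun x w => by
    simp only [m, Set.inter_left_comm {ω | X ω = x}]
    exact (sum_measure_fiber_inter_toReal_univ μ hY _).symm
  have hYW : ∀ y w, (μ ({ω | Y ω = y} ∩ {ω | W ω = w})).toReal = ∑ x, m x y w := fun y w =>
    (sum_measure_fiber_inter_toReal_univ μ hX _).symm
  have hm : ∀ x y w, 0 ≤ m x y w := fun _ _ _ => ENNReal.toReal_nonneg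
  calc condEnt μ X W
      = ∑ x, ∑ y, ∑ w, -(m x y w * Real.logb 2 ((∑ y', m x y' w) / (μ {ω | W ω = w}).toReal)) := by
        unfold condEnt
        simp only [hXW, Finset.sum_mul, Finset.sum_neg_distrib]
        exact congrArg _ (Finset.sum_congr rfl fun x _ => Finset.sum_comm)
    _ ≤ ∑ x, ∑ y, ∑ w, (-(m x y w * Real.logb 2 ((∑ x', m x' y w) / (μ {ω | W ω = w}).toReal)) +
          -(m x y w * Real.logb 2 (m x y w / ∑ x', m x' y w))) := by
        gcongr with x _ y _ w _
        refine Real.neg_mul_logb_div_le_add one_lt_two (hm x y w)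
          (Finset.single_le_sum (fun y _ => hm x y w) (Finset.mem_univ y))
          (Finset.single_le_sum (fun x _ => hm x y w) (Finset.mem_univ x)) ?_
        rw [← hYW]
        exact measureReal_mono Set.inter_subset_right
    _ = condEnt μ Y W + condEnt μ X (fun ω => (Y ω, W ω)) := by
        simp only [Finset.sum_add_distrib]
        congr 1
        · unfold condEnt
          simp only [hYW, Finset.sum_mul, Finset.sum_neg_distrib]
          rw [Finset.sum_comm]
          exact congrArg _ (Finset.sum_congr rfl fun y _ => Finset.sum_comm)
        · unfold condEnt
          simp only [Fintype.sum_prod_type, setOf_prodMk_eq, hYW]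
          rfl

theorem condEnt_prod_eq_sum_restrict (μ : Measure Ω) [Fintype S] [Fintype T] [Fintype V]
    (X : Ω → S) {Z : Ω → V} (W : Ω → T) (hZ : ∀ z, MeasurableSet {ω | Z ω = z}) :
    condEnt μ X (fun ω => (Z ω, W ω)) = ∑ z, condEnt (μ.restrict {ω | Z ω = z}) X W := by
  unfold condEnt
  rw [Finset.sum_comm]
  simp only [Fintype.sum_prod_type, setOf_prodMk_eq, Measure.restrict_apply' (hZ _),
    Set.inter_comm {ω | Z ω = _}, Set.inter_assoc]
  exact Finset.sum_congr rfl fun z _ => Finset.sum_comm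

theorem condEnt_smul (μ : Measure Ω) [Fintype S] [Fintype T] (X : Ω → S) (W : Ω → T)
    (c : ℝ≥0∞) : condEnt (c • μ) X W = c.toReal * condEnt μ X W := by
  rcases eq_or_ne c.toReal 0 with hc | hc
  · simp [condEnt, hc]
  simp only [condEnt, Finset.mul_sum, Measure.smul_apply, smul_eq_mul, ENNReal.toReal_mul,
    mul_div_mul_left _ _ hc]
  ring_nf

theorem condMI_smul (μ : Measure Ω) [Fintype S] [Fintype T] [Fintype U] (A : Ω → S)
    (B : Ω → T) (C : Ω → U) (c : ℝ≥0∞) : condMI (c • μ) A B C = c.toReal * condMI μ A B C := by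
  rw [condMI, condMI, condEnt_smul, condEnt_smul, mul_sub]

theorem condMI_nonneg (μ : Measure Ω) [IsFiniteMeasure μ] [Fintype S] [Fintype T] [Fintype U]
    (A : Ω → S) {B : Ω → T} {C : Ω → U} (hB : ∀ b, MeasurableSet {ω | B ω = b})
    (hC : ∀ c, MeasurableSet {ω | C ω = c}) : 0 ≤ condMI μ A B C :=
  sub_nonneg.2 (condEnt_le_condEnt_comp μ A (measurableSet_setOf_prodMk_eq hB hC) Prod.snd)

theorem condEnt_const_eq_binEnt (μ : Measure Ω) [IsProbabilityMeasure μ] {Z : Ω → Bool}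
    (hZ : MeasurableSet {ω | Z ω = true}) :
    condEnt μ Z (fun _ => ()) = binEnt (μ {ω | Z ω = true}).toReal := by
  have hfalse : {ω | Z ω = false} = {ω | Z ω = true}ᶜ := by ext; simp
  simp only [condEnt, binEnt, Fintype.sum_bool, Finset.univ_unique, Finset.sum_singleton,
    Set.ofPred_true, Set.inter_univ, measure_univ, ENNReal.toReal_one, div_one, hfalse,
    prob_compl_eq_one_sub hZ, ENNReal.toReal_sub_of_le prob_le_one ENNReal.one_ne_top,
    one_div, Real.logb_inv]
  ring

theorem sum_condMI_restrict_le (μ : Measure Ω) [IsFiniteMeasure μ] [Fintype S] [Fintype T]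
    [Fintype U] [Fintype V] {A : Ω → S} {B : Ω → T} {C : Ω → U} {Z : Ω → V}
    (hA : ∀ a, MeasurableSet {ω | A ω = a}) (hB : ∀ b, MeasurableSet {ω | B ω = b})
    (hC : ∀ c, MeasurableSet {ω | C ω = c}) (hZ : ∀ z, MeasurableSet {ω | Z ω = z}) :
    ∑ z, condMI (μ.restrict {ω | Z ω = z}) A B C ≤ condMI μ A B C + condEnt μ Z (fun _ => ()) := by
  have hsum : ∑ z, condMI (μ.restrict {ω | Z ω = z}) A B C =
      condEnt μ A (fun ω => (Z ω, C ω)) - condEnt μ A (fun ω => (Z ω, (B ω, C ω))) := by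
    simp only [condMI, Finset.sum_sub_distrib, condEnt_prod_eq_sum_restrict μ A _ hZ]
  have hdropZ := condEnt_le_condEnt_comp μ A (measurableSet_setOf_prodMk_eq hZ hC) Prod.snd
  have haddZ := condEnt_le_condEnt_add_condEnt_prod μ (fun ω => (B ω, C ω)) hA hZ
  have hdropBC := condEnt_le_condEnt_comp μ Z (measurableSet_setOf_prodMk_eq hB hC) fun _ => ()
  rw [hsum, condMI]
  linarith

end

theorem stmt11_general {Ω S T U : Type*} [MeasurableSpace Ω] [Fintype S] [Fintype T] [Fintype U]
    (π : Measure Ω) [IsProbabilityMeasure π]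
    (A : Ω → S) (B : Ω → T) (C : Ω → U)
    (hA : ∀ a, MeasurableSet {ω | A ω = a})
    (hB : ∀ b, MeasurableSet {ω | B ω = b})
    (hC : ∀ c, MeasurableSet {ω | C ω = c})
    (E : Set Ω) (hE : MeasurableSet E)
    (p : ℝ) (hp : (π E).toReal = p) :
    condMI (π[|E]) A B C ≤ (1 / p) * (condMI π A B C + binEnt p) := by
  classical
  let Z : Ω → Bool := fun ω => decide (ω ∈ E)
  have hZtrue : {ω | Z ω = true} = E := by ext; simp [Z]
  have hZfalse : {ω | Z ω = false} = Eᶜ := by ext; simp [Z]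
  have hZ : ∀ z, MeasurableSet {ω | Z ω = z}
    | true => hZtrue ▸ hE
    | false => hZfalse ▸ hE.compl
  have hsplit := sum_condMI_restrict_le π hA hB hC hZ
  rw [Fintype.sum_bool, condEnt_const_eq_binEnt π (hZ true), hZtrue, hZfalse, hp] at hsplit
  have hEc := condMI_nonneg (π.restrict Eᶜ) A hB hC
  have hpinv : 0 ≤ p⁻¹ := inv_nonneg.2 (hp ▸ ENNReal.toReal_nonneg)
  rw [ProbabilityTheory.cond, condMI_smul, ENNReal.toReal_inv, hp, one_div]
  gcongr
  linarith

/-- **Conditioning on an event barely affects mutual information.**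
Let `A, B, C` be finitely-valued random variables and `E` an event with `π(E) = p > 0`.
Then `I(A : B ∣ C, E) ≤ (1/p)·( I(A : B ∣ C) + H(p) )`, where the left-hand side is computed
with respect to the conditional measure `π[|E]`. -/
theorem stmt11 {Ω S T U : Type*} [MeasurableSpace Ω] [Fintype S] [Fintype T] [Fintype U]
    (π : Measure Ω) [IsProbabilityMeasure π]
    (A : Ω → S) (B : Ω → T) (C : Ω → U)
    (hA : ∀ a, MeasurableSet {ω | A ω = a})
    (hB : ∀ b, MeasurableSet {ω | B ω = b})
    (hC : ∀ c, MeasurableSet {ω | C ω = c})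
    (E : Set Ω) (hE : MeasurableSet E)
    (p : ℝ) (hp : (π E).toReal = p) (hp0 : 0 < p) :
    condMI (π[|E]) A B C ≤ (1 / p) * (condMI π A B C + binEnt p) :=
  stmt11_general π A B C hA hB hC E hE p hp
end
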